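/- arXiv:2103.03193 — 3 statements merged into one kernel-verified Lean document; each statement's English description precedes it below -/
import Mathlib

section
/- Let G be a bipartite graph with vertex sets I, J and nonnegative edge weights w. Let M* be a maximum-weight matching of G. If I' ⊆ I is chosen so that each i ∈ I belongs to I' with probability c1, and independently J' ⊆ J is chosen so that each j ∈ J belongs to J' with probability c2, then the expected weight of a maximum-weight matching of the induced subgraph on (I', J') is at least c1·c2 times the weight of M*. -/
def IsMatching {I J : Type} (M : Finset (I × J)) : Prop :=
  ∀ e ∈ M, ∀ e' ∈ M, e ≠ e' → e.1 ≠ e'.1 ∧ e.2 ≠ e'.2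

instance {I J : Type} [DecidableEq I] [DecidableEq J] (M : Finset (I × J)) :
    Decidable (IsMatching M) := by unfold IsMatching; infer_instance

/-- Maximum total weight of a matching in the induced bipartite subgraph on `A` and `B`. -/
def OPT {I J : Type} [DecidableEq I] [DecidableEq J] (w : I × J → ℝ)
    (A : Finset I) (B : Finset J) : ℝ :=
  ((A ×ˢ B).powerset.filter (fun M => IsMatching M)).sup'
    ⟨∅, Finset.mem_filter.mpr ⟨Finset.empty_mem_powerset _, fun e he => by simp at he⟩⟩ (fun M => ∑ e ∈ M, w e)


/-!
Fix a maximum-weight matching `M` of the whole graph. For every outcome, the edges of `M` that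
survive in `I' × J'` still form a matching of the induced subgraph, so their weight is a pointwise
lower bound for `OPT w I' J'`. By independence each edge of `M` survives with probability
`c1 * c2`, so by linearity of expectation this lower bound has expectation
`c1 * c2 * ∑ e ∈ M, w e = c1 * c2 * OPT w univ univ`.
-/

open MeasureTheory ProbabilityTheory

section Matching

theorem IsMatching.mono {I J : Type} {M N : Finset (I × J)} (hM : IsMatching M) (hNM : N ⊆ M) :
    IsMatching N :=
  fun e he e' he' hne => hM e (hNM he) e' (hNM he') hne

variable {I J : Type} [DecidableEq I] [DecidableEq J]

theorem sum_le_OPT (w : I × J → ℝ) {A : Finset I} {B : Finset J} {M : Finset (I × J)}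
    (hM : IsMatching M) (hMAB : M ⊆ A ×ˢ B) : ∑ e ∈ M, w e ≤ OPT w A B :=
  Finset.le_sup' (fun M => ∑ e ∈ M, w e) (Finset.mem_filter.mpr ⟨Finset.mem_powerset.mpr hMAB, hM⟩)

theorem exists_isMatching_sum_eq_OPT (w : I × J → ℝ) (A : Finset I) (B : Finset J) :
    ∃ M, IsMatching M ∧ M ⊆ A ×ˢ B ∧ ∑ e ∈ M, w e = OPT w A B := by
  obtain ⟨M, hM, hOPT⟩ := Finset.exists_mem_eq_sup' (f := fun M => ∑ e ∈ M, w e)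
    (s := (A ×ˢ B).powerset.filter IsMatching)
    ⟨∅, Finset.mem_filter.mpr ⟨Finset.empty_mem_powerset _, fun e he => by simp at he⟩⟩
  obtain ⟨hMAB, hM⟩ := Finset.mem_filter.mp hM
  exact ⟨M, hM, Finset.mem_powerset.mp hMAB, hOPT.symm⟩

theorem sum_inter_product_le_OPT (w : I × J → ℝ) {M : Finset (I × J)} (hM : IsMatching M)
    (A : Finset I) (B : Finset J) : ∑ e ∈ M ∩ A ×ˢ B, w e ≤ OPT w A B :=
  sum_le_OPT w (hM.mono Finset.inter_subset_left) Finset.inter_subset_right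

end Matching

theorem setOf_mem_product {Ω α β : Type} {X : Ω → Finset α} {Y : Ω → Finset β} (e : α × β) :
    {ω | e ∈ X ω ×ˢ Y ω} = X ⁻¹' {A | e.1 ∈ A} ∩ Y ⁻¹' {B | e.2 ∈ B} :=
  Set.ext fun _ => Finset.mem_product

section Expectation

variable {Ω : Type} [MeasurableSpace Ω] {μ : Measure Ω}

theorem integral_sum_inter [IsFiniteMeasure μ] {ι : Type} [DecidableEq ι] (s : Finset ι)
    {S : Ω → Finset ι} (hS : ∀ i ∈ s, MeasurableSet {ω | i ∈ S ω}) (f : ι → ℝ) :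
    ∫ ω, ∑ i ∈ s ∩ S ω, f i ∂μ = ∑ i ∈ s, μ.real {ω | i ∈ S ω} * f i := by
  have hind : ∀ ω, ∑ i ∈ s ∩ S ω, f i = ∑ i ∈ s, {ω | i ∈ S ω}.indicator (fun _ => f i) ω :=
    fun ω => by simp only [← Finset.sum_ite_mem, Set.indicator_apply, Set.mem_ofPred_eq]
  simp only [hind]
  rw [integral_finsetSum s fun i hi => (integrable_const (f i)).indicator (hS i hi)]
  exact Finset.sum_congr rfl fun i hi => integral_indicator_const (f i) (hS i hi)

theorem integrable_comp₂_of_finite {α β : Type} [MeasurableSpace α] [Finite α]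
    [MeasurableSingletonClass α] [MeasurableSpace β] [Finite β] [MeasurableSingletonClass β]
    [IsFiniteMeasure μ] {X : Ω → α} {Y : Ω → β} (hX : Measurable X) (hY : Measurable Y)
    (g : α → β → ℝ) : Integrable (fun ω => g (X ω) (Y ω)) μ :=
  Integrable.of_finite.comp_measurable (g := Function.uncurry g) (hX.prodMk hY)

section RandomFinset

variable {α β : Type} [Finite α] [Finite β]
  [MeasurableSpace (Finset α)] [MeasurableSingletonClass (Finset α)]
  [MeasurableSpace (Finset β)] [MeasurableSingletonClass (Finset β)]
  {X : Ω → Finset α} {Y : Ω → Finset β}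

theorem measurableSet_setOf_mem_product (hX : Measurable X) (hY : Measurable Y) (e : α × β) :
    MeasurableSet {ω | e ∈ X ω ×ˢ Y ω} := by
  rw [setOf_mem_product]
  exact (hX (Set.toFinite _).measurableSet).inter (hY (Set.toFinite _).measurableSet)

theorem ProbabilityTheory.IndepFun.measureReal_mem_product (hXY : IndepFun X Y μ) (e : α × β) :
    μ.real {ω | e ∈ X ω ×ˢ Y ω} = μ.real {ω | e.1 ∈ X ω} * μ.real {ω | e.2 ∈ Y ω} := by
  rw [setOf_mem_product, measureReal_def, measureReal_def, measureReal_def, ← ENNReal.toReal_mul,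
    hXY.measure_inter_preimage_eq_mul _ _ (Set.toFinite _).measurableSet
      (Set.toFinite _).measurableSet]
  rfl

end RandomFinset

end Expectation

theorem expected_random_subgraph_opt_general (I J : Type) [Fintype I] [Fintype J]
    [DecidableEq I] [DecidableEq J]
    (w : I × J → ℝ)
    (Ω : Type) [MeasurableSpace Ω] (μ : Measure Ω) [IsProbabilityMeasure μ]
    [MeasurableSpace (Finset I)] [MeasurableSingletonClass (Finset I)]
    [MeasurableSpace (Finset J)] [MeasurableSingletonClass (Finset J)]
    (I' : Ω → Finset I) (J' : Ω → Finset J) (hI' : Measurable I') (hJ' : Measurable J')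
    (hIndep : IndepFun I' J' μ) (c1 c2 : ℝ)
    (hc1 : ∀ i : I, (μ {ω | i ∈ I' ω}).toReal = c1)
    (hc2 : ∀ j : J, (μ {ω | j ∈ J' ω}).toReal = c2) :
    (∫ ω, OPT w (I' ω) (J' ω) ∂μ) ≥ c1 * c2 * OPT w Finset.univ Finset.univ := by
  obtain ⟨M, hM, -, hMOPT⟩ := exists_isMatching_sum_eq_OPT w Finset.univ Finset.univ
  have hsurvive (e : I × J) : μ.real {ω | e ∈ I' ω ×ˢ J' ω} = c1 * c2 := by
    rw [hIndep.measureReal_mem_product, measureReal_def, measureReal_def, hc1, hc2]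
  calc c1 * c2 * OPT w Finset.univ Finset.univ
      = ∑ e ∈ M, μ.real {ω | e ∈ I' ω ×ˢ J' ω} * w e := by
        simp only [hsurvive, ← Finset.mul_sum, hMOPT]
    _ = ∫ ω, ∑ e ∈ M ∩ I' ω ×ˢ J' ω, w e ∂μ :=
        (integral_sum_inter M (fun e _ => measurableSet_setOf_mem_product hI' hJ' e) w).symm
    _ ≤ ∫ ω, OPT w (I' ω) (J' ω) ∂μ :=
        integral_mono (integrable_comp₂_of_finite hI' hJ' fun A B => ∑ e ∈ M ∩ A ×ˢ B, w e)
          (integrable_comp₂_of_finite hI' hJ' (OPT w))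
          fun ω => sum_inter_product_le_OPT w hM (I' ω) (J' ω)

/-- If each `i ∈ I` lies in the random subset `I'` with probability `c1`, each `j ∈ J` lies in
the independently chosen random subset `J'` with probability `c2`, then the expected weight of
a maximum-weight matching of the induced subgraph on `(I', J')` is at least `c1·c2` times the
maximum matching weight of the whole graph. -/
theorem expected_random_subgraph_opt (I J : Type) [Fintype I] [Fintype J]
    [DecidableEq I] [DecidableEq J]
    (w : I × J → ℝ) (hw : ∀ e, 0 ≤ w e)
    (Ω : Type) [MeasurableSpace Ω] (μ : Measure Ω) [IsProbabilityMeasure μ]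
    [MeasurableSpace (Finset I)] [MeasurableSingletonClass (Finset I)]
    [MeasurableSpace (Finset J)] [MeasurableSingletonClass (Finset J)]
    (I' : Ω → Finset I) (J' : Ω → Finset J) (hI' : Measurable I') (hJ' : Measurable J')
    (hIndep : IndepFun I' J' μ) (c1 c2 : ℝ)
    (hc1 : ∀ i : I, (μ {ω | i ∈ I' ω}).toReal = c1)
    (hc2 : ∀ j : J, (μ {ω | j ∈ J' ω}).toReal = c2) :
    (∫ ω, OPT w (I' ω) (J' ω) ∂μ) ≥ c1 * c2 * OPT w Finset.univ Finset.univ :=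
  expected_random_subgraph_opt_general I J w Ω μ I' J' hI' hJ' hIndep c1 c2 hc1 hc2
end

section
/- Let n ≥ 3 and k = ⌊n/e⌋. Then (k/n) · ∑_{t=k+1}^{n} 1/(t−1) ≥ 1/e − 1/n. -/
/-!
Reindexed, the sum is `∑_{j=k}^{n-1} 1/j`, which dominates `∫_k^n dx/x = log (n/k) ≥ 1` because
`k ≤ n/e`. So the left side is at least `k/n`, and `k > n/e - 1` gives `k/n > 1/e - 1/n`.
-/

open Finset Real

theorem log_div_le_sum_Ico_inv {k n : ℕ} (hk : 0 < k) (hkn : k ≤ n) :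
    log (n / k) ≤ ∑ j ∈ Ico k n, (j : ℝ)⁻¹ := by
  have hk' : (0 : ℝ) < k := by exact_mod_cast hk
  rw [← integral_inv_of_pos hk' (hk'.trans_le (by exact_mod_cast hkn))]
  exact (inv_antitoneOn_Icc_right hk').integral_le_sum_Ico hkn

theorem sum_Icc_succ_one_div_sub_one (k n : ℕ) :
    ∑ t ∈ Icc (k + 1) n, 1 / ((t : ℝ) - 1) = ∑ j ∈ Ico k n, (j : ℝ)⁻¹ := by
  rw [← Ico_add_one_right_eq_Icc, ← sum_Ico_add' (c := 1)]
  simp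

theorem one_le_log_div_of_le_div_exp {x y : ℝ} (hy : 0 < y) (h : y ≤ x / exp 1) :
    1 ≤ log (x / y) := by
  have he_le : exp 1 ≤ x / y := by
    rw [le_div_iff₀ hy, mul_comm]
    exact (le_div_iff₀ (exp_pos 1)).mp h
  simpa using log_le_log (exp_pos 1) he_le

theorem ratio_sum_bound (n k : ℕ) (hn : 3 ≤ n) (hk : k = ⌊(n : ℝ) / Real.exp 1⌋₊) :
    ((k : ℝ) / (n : ℝ)) * (∑ t ∈ Finset.Icc (k + 1) n, 1 / ((t : ℝ) - 1)) ≥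
      1 / Real.exp 1 - 1 / (n : ℝ) := by
  have hn' : (3 : ℝ) ≤ n := by exact_mod_cast hn
  have he3 : exp 1 < 3 := exp_one_lt_d9.trans (by norm_num)
  have hk_le : (k : ℝ) ≤ n / exp 1 := hk ▸ Nat.floor_le (by positivity)
  have hk_gt : (n : ℝ) / exp 1 - 1 < k := by
    rw [hk, sub_lt_iff_lt_add]; exact Nat.lt_floor_add_one _
  have hk_pos : 0 < k := by
    rw [hk, Nat.floor_pos, le_div_iff₀ (exp_pos 1)]; linarith
  have hkn : k ≤ n := by
    have : (n : ℝ) / exp 1 ≤ n := div_le_self (by positivity) (one_le_exp zero_le_one)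
    exact_mod_cast hk_le.trans this
  have hsum : 1 ≤ ∑ t ∈ Icc (k + 1) n, 1 / ((t : ℝ) - 1) := by
    rw [sum_Icc_succ_one_div_sub_one]
    exact (one_le_log_div_of_le_div_exp (by exact_mod_cast hk_pos) hk_le).trans
      (log_div_le_sum_Ico_inv hk_pos hkn)
  calc 1 / exp 1 - 1 / (n : ℝ) = (n / exp 1 - 1) / n := by field_simp
    _ ≤ k / n := div_le_div_of_nonneg_right hk_gt.le (by positivity)
    _ ≤ k / n * ∑ t ∈ Icc (k + 1) n, 1 / ((t : ℝ) - 1) :=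
      le_mul_of_one_le_right (by positivity) hsum
end

section
/- Suppose for each step t with k+1 ≤ t ≤ n the expected gain E[w_t] satisfies E[w_t] ≥ (k/(n·(t−1)))·OPT, where 2 ≤ k = ⌊n/e⌋ and OPT ≥ 0. Then the total expected gain ∑_{t=k+1}^{n} E[w_t] is at least (1/e − 1/n)·OPT. -/
/-!
Summing the bounds gives `(k / n) · OPT · ∑_{i=k}^{n-1} 1/i`. The harmonic sum dominates
`∫_k^n dx/x = log (n / k) ≥ 1` because `k ≤ n / e`, and `k / n ≥ 1/e - 1/n` because `k > n/e - 1`.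
-/

open Finset Real

lemma log_sub_log_le_sum_Ico_inv {k n : ℕ} (hk : 0 < k) (hkn : k ≤ n) :
    log n - log k ≤ ∑ i ∈ Ico k n, (i : ℝ)⁻¹ := by
  have hk' : (0 : ℝ) < k := by exact_mod_cast hk
  have hn' : (0 : ℝ) < n := hk'.trans_le (by exact_mod_cast hkn)
  calc log n - log k = ∫ x in (k : ℝ)..n, x⁻¹ := by
        rw [integral_inv_of_pos hk' hn', log_div hn'.ne' hk'.ne']
    _ ≤ ∑ i ∈ Ico k n, (i : ℝ)⁻¹ := (inv_antitoneOn_Icc_right hk').integral_le_sum_Ico hkn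

lemma one_le_sum_Ico_inv {k n : ℕ} (hk : 0 < k) (hkn : exp 1 * k ≤ n) :
    1 ≤ ∑ i ∈ Ico k n, (i : ℝ)⁻¹ := by
  have hk' : (0 : ℝ) < k := by exact_mod_cast hk
  have hle : k ≤ n := by
    exact_mod_cast le_trans (le_mul_of_one_le_left hk'.le (one_le_exp zero_le_one)) hkn
  have hlog : 1 ≤ log n - log k := by
    have := log_le_log (by positivity) hkn
    rw [log_mul (exp_pos 1).ne' hk'.ne', log_exp] at this
    linarith
  exact hlog.trans (log_sub_log_le_sum_Ico_inv hk hle)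

lemma sum_Icc_succ_inv_sub_one (k n : ℕ) :
    ∑ t ∈ Icc (k + 1) n, ((t : ℝ) - 1)⁻¹ = ∑ i ∈ Ico k n, (i : ℝ)⁻¹ := by
  rw [← Ico_add_one_right_eq_Icc, ← sum_Ico_add' (fun t : ℕ ↦ ((t : ℝ) - 1)⁻¹)]
  simp

lemma inv_sub_inv_le_floor_div {a : ℝ} (ha : 0 < a) {n : ℕ} (hn : 0 < n) :
    1 / a - 1 / n ≤ ⌊n / a⌋₊ / n := by
  have hn' : (0 : ℝ) < n := by exact_mod_cast hn
  have hfloor : (n : ℝ) / a - 1 < ⌊n / a⌋₊ := Nat.sub_one_lt_floor _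
  rw [le_div_iff₀ hn']
  calc (1 / a - 1 / n) * n = n / a - 1 := by field_simp
    _ ≤ ⌊n / a⌋₊ := hfloor.le

theorem total_expected_gain_general (n k : ℕ) (hk : k = ⌊(n : ℝ) / Real.exp 1⌋₊)
    (hk2 : 2 ≤ k) (OPT : ℝ) (hOPT : 0 ≤ OPT) (E : ℕ → ℝ)
    (hE : ∀ t ∈ Finset.Icc (k + 1) n, E t ≥ (k : ℝ) / ((n : ℝ) * ((t : ℝ) - 1)) * OPT) :
    (∑ t ∈ Finset.Icc (k + 1) n, E t) ≥ (1 / Real.exp 1 - 1 / (n : ℝ)) * OPT := by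
  have hk0 : 0 < k := by omega
  have hkn : exp 1 * k ≤ n := by
    rw [← le_div_iff₀' (exp_pos 1), hk]
    exact Nat.floor_le (by positivity)
  have hn0 : 0 < n := by
    exact_mod_cast (by positivity : (0 : ℝ) < exp 1 * k).trans_le hkn
  have hsum : 1 ≤ ∑ t ∈ Icc (k + 1) n, ((t : ℝ) - 1)⁻¹ :=
    sum_Icc_succ_inv_sub_one k n ▸ one_le_sum_Ico_inv hk0 hkn
  calc (1 / exp 1 - 1 / (n : ℝ)) * OPT ≤ (k / n) * OPT := by
        gcongr; exact hk ▸ inv_sub_inv_le_floor_div (exp_pos 1) hn0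
    _ ≤ (k / n) * (∑ t ∈ Icc (k + 1) n, ((t : ℝ) - 1)⁻¹) * OPT := by
        gcongr; exact le_mul_of_one_le_right (by positivity) hsum
    _ = ∑ t ∈ Icc (k + 1) n, (k : ℝ) / (n * ((t : ℝ) - 1)) * OPT := by
        rw [mul_sum, sum_mul]; congr! 1 with t; rw [div_mul_eq_div_div]; ring
    _ ≤ ∑ t ∈ Icc (k + 1) n, E t := sum_le_sum hE

theorem total_expected_gain (n k : ℕ) (hn : 3 ≤ n) (hk : k = ⌊(n : ℝ) / Real.exp 1⌋₊)
    (hk2 : 2 ≤ k) (OPT : ℝ) (hOPT : 0 ≤ OPT) (E : ℕ → ℝ)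
    (hE : ∀ t ∈ Finset.Icc (k + 1) n, E t ≥ (k : ℝ) / ((n : ℝ) * ((t : ℝ) - 1)) * OPT) :
    (∑ t ∈ Finset.Icc (k + 1) n, E t) ≥ (1 / Real.exp 1 - 1 / (n : ℝ)) * OPT :=
  total_expected_gain_general n k hk hk2 OPT hOPT E hE
end
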